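/- Let U ⊆ ℂ be open and q_0, q_1 : U → ℂ holomorphic. Define q_{0,n}, q_{1,n} : U → ℂ for n ≥ 2 by q_{0,2} := q_0, q_{1,2} := q_1, and q_{0,n+1} := q_{0,n}′ + q_{1,n}·q_0, q_{1,n+1} := q_{1,n}′ + q_{0,n} + q_{1,n}·q_1. Let y_1, y_2 : U → ℂ be holomorphic solutions of y″ = q_0 y + q_1 y′ on U, let z ∈ U, and let α_{1,n}, α_{2,n} ∈ ℂ (n ≥ 0) be numbers such that for each i ∈ {1,2} and each n ≥ 0, y_i^{(n)}(z)/n! = α_{1,n}·y_i^{(n+1)}(z)/(n+1)! + α_{2,n}·y_i^{(n+2)}(z)/(n+2)!. Define A_n, B_n from b_n := α_{1,n} (n ≥ 0) and a_n := α_{2,n−1} (n ≥ 1) by the convergent recursions. Fix N ≥ 2 and assume the two vectors (y_i^{(N)}(z)/N!, y_i^{(N+1)}(z)/(N+1)!), i = 1, 2, are linearly independent in ℂ². Then q_{0,N}(z)·A_{N−1} + q_{1,N}(z)·B_{N−1} = N!, and if moreover α_{2,N−1} ≠ 0 then q_{0,N}(z)·A_{N−2} + q_{1,N}(z)·B_{N−2}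 = 0; in particular, if in addition A_{N−2} ≠ 0 and q_{1,N}(z) ≠ 0, then −q_{0,N}(z)/q_{1,N}(z) = B_{N−2}/A_{N−2}. -/

import Mathlib

/-!
Write `xₙ = y^{(n)}(z)/n!`. Pairing the recurrence `xₙ = bₙ xₙ₊₁ + aₙ₊₁ xₙ₊₂` with the
convergent recursion gives a quantity independent of `n`, which expands `x₀` and `x₁` along the
convergents: `x₀ = Aₙ xₙ₊₁ + aₙ₊₁ Aₙ₋₁ xₙ₊₂`, and likewise `x₁` with `Bₙ`. Differentiating the
equation gives `N! x_N = q_{0,N}(z) x₀ + q_{1,N}(z) x₁`, so every solution satisfies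
`(q_{0,N} A_{N-1} + q_{1,N} B_{N-1} - N!) x_N
  + α_{2,N-1} (q_{0,N} A_{N-2} + q_{1,N} B_{N-2}) x_{N+1} = 0`.
Two solutions with independent `(x_N, x_{N+1})` force both coefficients to vanish.
-/

open Filter Topology

/-- The coefficients `(q_{0,n}, q_{1,n})` (here `q2Seq q0 q1 s = (q_{0,2+s}, q_{1,2+s})`)
obtained by repeatedly differentiating the equation `y'' = q0 y + q1 y'`. -/
noncomputable def q2Seq (q0 q1 : ℂ → ℂ) : ℕ → (ℂ → ℂ) × (ℂ → ℂ)
  | 0 => (q0, q1)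
  | s + 1 =>
      (deriv (q2Seq q0 q1 s).1 + (q2Seq q0 q1 s).2 * q0,
       deriv (q2Seq q0 q1 s).2 + (q2Seq q0 q1 s).1 + (q2Seq q0 q1 s).2 * q1)

/-- Continued fraction numerators, index shifted by one: `cfA a b (n+1) = Aₙ`. -/
noncomputable def cfA (a b : ℕ → ℂ) : ℕ → ℂ
  | 0 => 1
  | 1 => b 0
  | n + 2 => b (n + 1) * cfA a b (n + 1) + a (n + 1) * cfA a b n

/-- Continued fraction denominators, index shifted by one: `cfB a b (n+1) = Bₙ`. -/
noncomputable def cfB (a b : ℕ → ℂ) : ℕ → ℂ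
  | 0 => 0
  | 1 => 1
  | n + 2 => b (n + 1) * cfB a b (n + 1) + a (n + 1) * cfB a b n

theorem recurrence_pairing_eq {a b x c : ℕ → ℂ}
    (hx : ∀ n, x n = b n * x (n + 1) + a (n + 1) * x (n + 2))
    (hc : ∀ n, c (n + 2) = b (n + 1) * c (n + 1) + a (n + 1) * c n) (n : ℕ) :
    c (n + 1) * x (n + 1) + a (n + 1) * c n * x (n + 2) = c 1 * x 1 + a 1 * c 0 * x 2 := by
  induction n with
  | zero => rfl
  | succ n ih => rw [← ih, hx (n + 1), hc n]; ring

theorem eq_cfA_mul_add_of_recurrence {a b x : ℕ → ℂ}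
    (hx : ∀ n, x n = b n * x (n + 1) + a (n + 1) * x (n + 2)) (n : ℕ) :
    x 0 = cfA a b (n + 1) * x (n + 1) + a (n + 1) * cfA a b n * x (n + 2) := by
  rw [recurrence_pairing_eq hx (fun _ => rfl), hx 0]
  simp [cfA]

theorem eq_cfB_mul_add_of_recurrence {a b x : ℕ → ℂ}
    (hx : ∀ n, x n = b n * x (n + 1) + a (n + 1) * x (n + 2)) (n : ℕ) :
    x 1 = cfB a b (n + 1) * x (n + 1) + a (n + 1) * cfB a b n * x (n + 2) := by
  rw [recurrence_pairing_eq hx (fun _ => rfl)]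
  simp [cfB]

theorem linear_form_eq_convergent_combination {a b x : ℕ → ℂ}
    (hx : ∀ n, x n = b n * x (n + 1) + a (n + 1) * x (n + 2)) (Q₀ Q₁ : ℂ) (n : ℕ) :
    Q₀ * x 0 + Q₁ * x 1 =
      (Q₀ * cfA a b (n + 1) + Q₁ * cfB a b (n + 1)) * x (n + 1) +
        a (n + 1) * (Q₀ * cfA a b n + Q₁ * cfB a b n) * x (n + 2) := by
  rw [eq_cfA_mul_add_of_recurrence hx n, eq_cfB_mul_add_of_recurrence hx n]
  ring

theorem eq_zero_of_linearIndependent_of_mul_add {K : Type*} [Field K] {u₁ v₁ u₂ v₂ c d : K}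
    (h : LinearIndependent K ![![u₁, v₁], ![u₂, v₂]])
    (h₁ : c * u₁ + d * v₁ = 0) (h₂ : c * u₂ + d * v₂ = 0) : c = 0 ∧ d = 0 := by
  have hdet : u₁ * v₂ - v₁ * u₂ ≠ 0 := by
    have hM := Matrix.linearIndependent_rows_iff_isUnit.mp
      (show LinearIndependent K (Matrix.of ![![u₁, v₁], ![u₂, v₂]]).row from h)
    simpa [Matrix.det_fin_two_of] using ((Matrix.isUnit_iff_isUnit_det _).mp hM).ne_zero
  constructor
  · refine (mul_eq_zero.mp ?_).resolve_right hdet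
    linear_combination v₂ * h₁ - v₁ * h₂
  · refine (mul_eq_zero.mp ?_).resolve_right hdet
    linear_combination u₁ * h₂ - u₂ * h₁

section Differentiation

variable {U : Set ℂ} {q0 q1 : ℂ → ℂ}

theorem q2Seq_differentiableOn (hU : IsOpen U)
    (hq0 : DifferentiableOn ℂ q0 U) (hq1 : DifferentiableOn ℂ q1 U) (s : ℕ) :
    DifferentiableOn ℂ (q2Seq q0 q1 s).1 U ∧ DifferentiableOn ℂ (q2Seq q0 q1 s).2 U := by
  induction s with
  | zero => exact ⟨hq0, hq1⟩
  | succ s ih =>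
    exact ⟨(ih.1.deriv hU).add (ih.2.mul hq0), ((ih.2.deriv hU).add ih.1).add (ih.2.mul hq1)⟩

theorem iteratedDeriv_add_two_eq_q2Seq (hU : IsOpen U)
    (hq0 : DifferentiableOn ℂ q0 U) (hq1 : DifferentiableOn ℂ q1 U)
    {y : ℂ → ℂ} (hy : DifferentiableOn ℂ y U)
    (heq : ∀ w ∈ U, iteratedDeriv 2 y w = q0 w * y w + q1 w * deriv y w) (s : ℕ) :
    ∀ w ∈ U, iteratedDeriv (s + 2) y w =
      (q2Seq q0 q1 s).1 w * y w + (q2Seq q0 q1 s).2 w * deriv y w := by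
  induction s with
  | zero => exact heq
  | succ s ih =>
    intro w hw
    have hU_nhds := hU.mem_nhds hw
    obtain ⟨hP, hQ⟩ := q2Seq_differentiableOn hU hq0 hq1 s
    have hy'' : deriv (deriv y) w = q0 w * y w + q1 w * deriv y w := by
      rw [← heq w hw, iteratedDeriv_succ, iteratedDeriv_one]
    have hderiv := ((hP.differentiableAt hU_nhds).hasDerivAt.fun_mul
      (hy.differentiableAt hU_nhds).hasDerivAt).fun_add
        ((hQ.differentiableAt hU_nhds).hasDerivAt.fun_mul
          ((hy.deriv hU).differentiableAt hU_nhds).hasDerivAt)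
    rw [iteratedDeriv_succ, (eventuallyEq_of_mem hU_nhds ih).deriv_eq, hderiv.deriv, hy'']
    simp only [q2Seq, Pi.add_apply, Pi.mul_apply]
    ring

theorem convergent_relation_of_solution (hU : IsOpen U)
    (hq0 : DifferentiableOn ℂ q0 U) (hq1 : DifferentiableOn ℂ q1 U)
    {y : ℂ → ℂ} (hy : DifferentiableOn ℂ y U)
    (heq : ∀ w ∈ U, iteratedDeriv 2 y w = q0 w * y w + q1 w * deriv y w)
    {z : ℂ} (hz : z ∈ U) {α₁ α₂ : ℕ → ℂ}
    (hrec : ∀ n : ℕ,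
      iteratedDeriv n y z / n.factorial =
        α₁ n * (iteratedDeriv (n + 1) y z / (n + 1).factorial) +
          α₂ n * (iteratedDeriv (n + 2) y z / (n + 2).factorial)) (s : ℕ) :
    ((q2Seq q0 q1 s).1 z * cfA (fun n => α₂ (n - 1)) α₁ (s + 2) +
        (q2Seq q0 q1 s).2 z * cfB (fun n => α₂ (n - 1)) α₁ (s + 2) - (s + 2).factorial) *
        (iteratedDeriv (s + 2) y z / (s + 2).factorial) +
      α₂ (s + 1) * ((q2Seq q0 q1 s).1 z * cfA (fun n => α₂ (n - 1)) α₁ (s + 1) +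
        (q2Seq q0 q1 s).2 z * cfB (fun n => α₂ (n - 1)) α₁ (s + 1)) *
        (iteratedDeriv (s + 2 + 1) y z / (s + 2 + 1).factorial) = 0 := by
  have hcf := linear_form_eq_convergent_combination (a := fun n => α₂ (n - 1))
    (x := fun n => iteratedDeriv n y z / n.factorial)
    hrec ((q2Seq q0 q1 s).1 z) ((q2Seq q0 q1 s).2 z) (s + 1)
  have hfac : ((s + 2).factorial : ℂ) ≠ 0 := mod_cast (s + 2).factorial_ne_zero
  simp only [iteratedDeriv_zero, iteratedDeriv_one, Nat.factorial_zero, Nat.factorial_one,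
    Nat.cast_one, div_one, ← iteratedDeriv_add_two_eq_q2Seq hU hq0 hq1 hy heq s z hz,
    show s + 1 + 1 = s + 2 from rfl, show s + 1 + 2 = s + 2 + 1 from rfl,
    show s + 2 - 1 = s + 1 from rfl] at hcf
  linear_combination (mul_div_cancel₀ (iteratedDeriv (s + 2) y z) hfac).symm - hcf

end Differentiation

/-- `-q_{0,N}/q_{1,N}` equals the truncated continued fraction built from the three-term
recurrence `xₙ = α_{1,n} x_{n+1} + α_{2,n} x_{n+2}` satisfied by the normalized
derivatives `xₙ = y^{(n)}(z)/n!` of two solutions `y₁, y₂` of `y'' = q0 y + q1 y'`: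
with `Aₙ = cfA a b (n+1)`, `Bₙ = cfB a b (n+1)` for `b n = α_{1,n}`, `a n = α_{2,n-1}`,
if the vectors `(y_i^{(N)}(z)/N!, y_i^{(N+1)}(z)/(N+1)!)`, `i = 1,2`, are linearly
independent then `q_{0,N}(z) A_{N-1} + q_{1,N}(z) B_{N-1} = N!`; if moreover
`α_{2,N-1} ≠ 0` then `q_{0,N}(z) A_{N-2} + q_{1,N}(z) B_{N-2} = 0`, whence
`-q_{0,N}(z)/q_{1,N}(z) = B_{N-2}/A_{N-2}` when `A_{N-2} ≠ 0` and `q_{1,N}(z) ≠ 0`. -/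
theorem qRatio_eq_truncated_continued_fraction
    (U : Set ℂ) (hU : IsOpen U)
    (q0 q1 : ℂ → ℂ)
    (hq0 : DifferentiableOn ℂ q0 U) (hq1 : DifferentiableOn ℂ q1 U)
    (y₁ y₂ : ℂ → ℂ)
    (hy₁ : DifferentiableOn ℂ y₁ U) (hy₂ : DifferentiableOn ℂ y₂ U)
    (heq₁ : ∀ w ∈ U, iteratedDeriv 2 y₁ w = q0 w * y₁ w + q1 w * deriv y₁ w)
    (heq₂ : ∀ w ∈ U, iteratedDeriv 2 y₂ w = q0 w * y₂ w + q1 w * deriv y₂ w)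
    (z : ℂ) (hz : z ∈ U)
    (α₁ α₂ : ℕ → ℂ)
    (hrec₁ : ∀ n : ℕ,
      iteratedDeriv n y₁ z / n.factorial =
        α₁ n * (iteratedDeriv (n + 1) y₁ z / (n + 1).factorial) +
          α₂ n * (iteratedDeriv (n + 2) y₁ z / (n + 2).factorial))
    (hrec₂ : ∀ n : ℕ,
      iteratedDeriv n y₂ z / n.factorial =
        α₁ n * (iteratedDeriv (n + 1) y₂ z / (n + 1).factorial) +
          α₂ n * (iteratedDeriv (n + 2) y₂ z / (n + 2).factorial))
    (N : ℕ) (hN : 2 ≤ N)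
    (hindep : LinearIndependent ℂ
      ![![iteratedDeriv N y₁ z / N.factorial,
          iteratedDeriv (N + 1) y₁ z / (N + 1).factorial],
        ![iteratedDeriv N y₂ z / N.factorial,
          iteratedDeriv (N + 1) y₂ z / (N + 1).factorial]]) :
    (q2Seq q0 q1 (N - 2)).1 z * cfA (fun n => α₂ (n - 1)) α₁ N +
        (q2Seq q0 q1 (N - 2)).2 z * cfB (fun n => α₂ (n - 1)) α₁ N = N.factorial ∧
    (α₂ (N - 1) ≠ 0 →
      (q2Seq q0 q1 (N - 2)).1 z * cfA (fun n => α₂ (n - 1)) α₁ (N - 1) +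
        (q2Seq q0 q1 (N - 2)).2 z * cfB (fun n => α₂ (n - 1)) α₁ (N - 1) = 0) ∧
    (α₂ (N - 1) ≠ 0 → cfA (fun n => α₂ (n - 1)) α₁ (N - 1) ≠ 0 →
      (q2Seq q0 q1 (N - 2)).2 z ≠ 0 →
      -(q2Seq q0 q1 (N - 2)).1 z / (q2Seq q0 q1 (N - 2)).2 z =
        cfB (fun n => α₂ (n - 1)) α₁ (N - 1) / cfA (fun n => α₂ (n - 1)) α₁ (N - 1)) := by
  obtain ⟨s, rfl⟩ : ∃ s, N = s + 2 := ⟨N - 2, by omega⟩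
  simp only [Nat.add_sub_cancel, show s + 2 - 1 = s + 1 from rfl]
  obtain ⟨hcoeff₀, hcoeff₁⟩ := eq_zero_of_linearIndependent_of_mul_add hindep
    (convergent_relation_of_solution hU hq0 hq1 hy₁ heq₁ hz hrec₁ s)
    (convergent_relation_of_solution hU hq0 hq1 hy₂ heq₂ hz hrec₂ s)
  have hconvergent (hα : α₂ (s + 1) ≠ 0) := (mul_eq_zero.mp hcoeff₁).resolve_left hα
  refine ⟨sub_eq_zero.mp hcoeff₀, hconvergent, fun hα hA hQ => ?_⟩
  rw [div_eq_div_iff hQ hA]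
  linear_combination -hconvergent hα
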